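/- arXiv:math/0508105 — 4 statements merged into one kernel-verified Lean document; each statement's English description precedes it below -/
import Mathlib

section
/- Let V be a finitely generated H-module and C a conformal subalgebra of Cend V. If a, a′ ∈ C and n, n′ ∈ ℕ satisfy a(n) = a′(n′) as elements of End_k(V), then a∘ₙb = a′∘₍ₙ′₎b for every b ∈ C, and {b∘ₙa} = {b∘₍ₙ′₎a′} for every b ∈ C. Consequently A(C) acts on C as an A(C)–A(C)-bimodule by a(n)·b = a∘ₙb and b·a(n) = {b∘ₙa}. -/
open Polynomial

section Base

variable (k : Type) [Field k]
variable (V : Type) [AddCommGroup V] [Module k V] [Module (Polynomial k) V]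
  [IsScalarTower k (Polynomial k) V]

/-- The action of `D` (that is, of the polynomial variable `X ∈ H = k[D]`) on `V`,
as a `k`-linear endomorphism. -/
noncomputable def Tact : Module.End k V where
  toFun u := (X : Polynomial k) • u
  map_add' u v := smul_add _ _ _
  map_smul' c u := by
    simp only [RingHom.id_apply]
    rw [← algebraMap_smul (Polynomial k) c u,
      ← algebraMap_smul (Polynomial k) c ((X : Polynomial k) • u),
      smul_smul, smul_smul, mul_comm]

/-- Sequences of `k`-linear endomorphisms of `V`; conformal endomorphisms are such sequences. -/
abbrev CSeq := ℕ → Module.End k V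

/-- `a` is a conformal endomorphism of `V`: locality (for each `u`, `a n u = 0` for `n` large)
and translation invariance `a n ∘ T - T ∘ a n = n • a (n-1)` (with `a (-1) := 0`;
note that for `n = 0` the right-hand side vanishes because of the scalar `(0 : k)`). -/
def IsCEnd (a : CSeq k V) : Prop :=
  (∀ u : V, ∃ N : ℕ, ∀ n ≥ N, a n u = 0) ∧
  (∀ n : ℕ, a n * Tact k V - Tact k V * a n = (n : k) • a (n - 1))

/-- The action of `D` on conformal endomorphisms: `(D a)(n) = -n • a(n-1)`. -/
noncomputable def cD (a : CSeq k V) : CSeq k V := fun n => -((n : k) • a (n - 1))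

/-- The `n`-th conformal product `(a ∘ₙ b)(m) = ∑_{s=0}^n (-1)^s C(n,s) a(n-s) b(m+s)`. -/
noncomputable def comul (n : ℕ) (a b : CSeq k V) : CSeq k V :=
  fun m => ∑ s ∈ Finset.range (n + 1),
    (((-1 : k) ^ s) * (n.choose s : k)) • (a (n - s) * b (m + s))

/-- The action of a polynomial `p ∈ H = k[D]` on conformal endomorphisms (via `cD`). -/
noncomputable def hsmul (p : Polynomial k) (a : CSeq k V) : CSeq k V :=
  p.sum fun s c => c • (cD k V)^[s] a

/-- `{a ∘ₙ b} = ∑_{s ≥ 0} ((-1)^{n+s}/s!) Dˢ (a ∘_{n+s} b)`, evaluated pointwise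
(the sum is pointwise finite). -/
noncomputable def cbrace (n : ℕ) (a b : CSeq k V) : CSeq k V :=
  fun m => ∑ᶠ s : ℕ,
    (((-1 : k) ^ (n + s)) * ((s.factorial : k))⁻¹) • ((cD k V)^[s] (comul k V (n + s) a b)) m

/-- For `C ⊆ Cend V`, the set `A(C) = {a(n) : a ∈ C, n ∈ ℕ} ⊆ End_k V`. -/
def setA (C : Set (CSeq k V)) : Set (Module.End k V) :=
  {x | ∃ a ∈ C, ∃ n : ℕ, a n = x}

/-- For `S ⊆ End_k V`, the set `F(S) = {a ∈ Cend V : a(n) ∈ S for all n}`. -/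
def setF (S : Set (Module.End k V)) : Set (CSeq k V) :=
  {a | IsCEnd k V a ∧ ∀ n : ℕ, a n ∈ S}

/-- `C` is a conformal subalgebra of `Cend V`: a set of conformal endomorphisms which is
an `H`-submodule (closed under addition, `k`-scalars and the action of `D`)
closed under all `n`-th products. -/
structure IsConfSubalgebra (C : Set (CSeq k V)) : Prop where
  isCEnd : ∀ a ∈ C, IsCEnd k V a
  zero_mem : (0 : CSeq k V) ∈ C
  add_mem : ∀ a ∈ C, ∀ b ∈ C, a + b ∈ C
  smul_mem : ∀ (r : k), ∀ a ∈ C, r • a ∈ C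
  cD_mem : ∀ a ∈ C, cD k V a ∈ C
  comul_mem : ∀ a ∈ C, ∀ b ∈ C, ∀ n : ℕ, comul k V n a b ∈ C

/-- The `k`-span `A ∘_ω B` of all products `a ∘ₙ b`, `a ∈ A`, `b ∈ B`, `n ∈ ℕ`. -/
def omegaMulSet (A B : Set (CSeq k V)) : Set (CSeq k V) :=
  (Submodule.span k {y | ∃ a ∈ A, ∃ b ∈ B, ∃ n : ℕ, y = comul k V n a b} : Submodule k (CSeq k V))

/-- Powers `I⁽¹⁾ = I`, `I⁽ᵐ⁺¹⁾ = I⁽ᵐ⁾ ∘_ω I`. -/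
def idealPowSeq (I : Set (CSeq k V)) : ℕ → Set (CSeq k V)
  | 0 => I
  | m + 1 => omegaMulSet k V (idealPowSeq I m) I

/-- The sequence of powers of `I` is eventually zero. -/
def IsNilpotentSeqSet (I : Set (CSeq k V)) : Prop :=
  ∃ m : ℕ, ∀ m' ≥ m, idealPowSeq k V I m' ⊆ {0}

/-- `I` is an ideal of the conformal subalgebra `C ⊆ Cend V`. -/
structure IsConfIdealOf (C I : Set (CSeq k V)) : Prop where
  subset : I ⊆ C
  zero_mem : (0 : CSeq k V) ∈ I
  add_mem : ∀ a ∈ I, ∀ b ∈ I, a + b ∈ I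
  smul_mem : ∀ (r : k), ∀ a ∈ I, r • a ∈ I
  cD_mem : ∀ a ∈ I, cD k V a ∈ I
  comul_mem_left : ∀ a ∈ C, ∀ b ∈ I, ∀ n : ℕ, comul k V n a b ∈ I
  comul_mem_right : ∀ a ∈ C, ∀ b ∈ I, ∀ n : ℕ, comul k V n b a ∈ I

end Base



section Aux

variable {k : Type} [Field k] [CharZero k]
variable {V : Type} [AddCommGroup V] [Module k V] [Module (Polynomial k) V]
  [IsScalarTower k (Polynomial k) V]

/-- The commutator with `T`. -/
noncomputable def adT (x : Module.End k V) : Module.End k V :=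
  x * Tact k V - Tact k V * x

lemma adT_smul (c : k) (x : Module.End k V) : adT (c • x) = c • adT x := by
  simp [adT, smul_sub, smul_mul_assoc, mul_smul_comm]

lemma neg_one_pow_cancel (p q : ℕ) : ((-1 : k)) ^ (p + q) * (-1 : k) ^ p = (-1 : k) ^ q := by
  rw [pow_add, mul_right_comm, ← mul_pow]
  norm_num

lemma neg_one_pow_sq (p : ℕ) : ((-1 : k)) ^ p * (-1 : k) ^ p = 1 := by
  rw [← mul_pow]; norm_num

lemma neg_one_pow_sub (N i : ℕ) (h : i ≤ N) :
    ((-1 : k)) ^ (N - i) = (-1 : k) ^ N * (-1 : k) ^ i := by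
  have h1 := neg_one_pow_cancel (k := k) i (N - i)
  rw [show i + (N - i) = N from by omega] at h1
  exact h1.symm

lemma adT_iterate {a : CSeq k V} (ha : IsCEnd k V a) (n : ℕ) (s : ℕ) :
    adT^[s] (a n) = ((n.descFactorial s : k)) • a (n - s) := by
  induction s with
  | zero => simp
  | succ s ih =>
    rw [Function.iterate_succ_apply', ih, adT_smul]
    have h2 : adT (a (n - s)) = (((n - s : ℕ)) : k) • a (n - s - 1) := ha.2 (n - s)
    rw [h2, smul_smul, Nat.sub_sub, Nat.descFactorial_succ]
    congr 1
    push_cast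
    ring

lemma comul_eq_sum_adT {a : CSeq k V} (ha : IsCEnd k V a) (b : CSeq k V) (n N m : ℕ)
    (hN : n + 1 ≤ N) :
    comul k V n a b m = ∑ s ∈ Finset.range N,
      (((-1 : k) ^ s) * ((s.factorial : k))⁻¹) • (adT^[s] (a n) * b (m + s)) := by
  rw [comul, show N = (n + 1) + (N - (n + 1)) from by omega,
    Finset.sum_range_add
      (fun s => (((-1 : k) ^ s) * ((s.factorial : k))⁻¹) • (adT^[s] (a n) * b (m + s)))
      (n + 1) (N - (n + 1))]
  have hz : ∀ x ∈ Finset.range (N - (n + 1)),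
      (((-1 : k) ^ (n + 1 + x)) * (((n + 1 + x).factorial : k))⁻¹) •
        (adT^[n + 1 + x] (a n) * b (m + (n + 1 + x))) = 0 := by
    intro x _
    rw [adT_iterate ha, Nat.descFactorial_eq_zero_iff_lt.mpr (by omega)]
    simp
  rw [Finset.sum_eq_zero hz, add_zero]
  apply Finset.sum_congr rfl
  intro s hs
  have hsn : s ≤ n := by simpa [Nat.lt_succ_iff] using hs
  rw [adT_iterate ha, smul_mul_assoc, smul_smul]
  congr 1
  have hf : (s.factorial : k) ≠ 0 := Nat.cast_ne_zero.mpr s.factorial_ne_zero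
  rw [Nat.descFactorial_eq_factorial_mul_choose]
  push_cast
  field_simp

lemma cD_iterate (s : ℕ) : ∀ (c : CSeq k V) (m : ℕ),
    (cD k V)^[s] c m = (((-1 : k) ^ s) * (m.descFactorial s : k)) • c (m - s) := by
  induction s with
  | zero => intro c m; simp
  | succ s ih =>
    intro c m
    rw [Function.iterate_succ_apply, ih (cD k V c) m]
    have h1 : cD k V c (m - s) = -((((m - s : ℕ)) : k) • c (m - s - 1)) := rfl
    rw [h1, smul_neg, smul_smul, Nat.sub_sub, Nat.descFactorial_succ]
    rw [← neg_smul]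
    congr 1
    push_cast
    ring

lemma KI (i : ℕ) : ∀ (m : ℕ) (n : ℕ),
    (∑ s ∈ Finset.range (m + 1),
        (-1 : k) ^ s * (m.choose s : k) * ((n + s).choose i : k))
      = (-1 : k) ^ m * (if m ≤ i then ((n.choose (i - m) : k)) else 0) := by
  intro m
  induction m with
  | zero => intro n; simp
  | succ m ih =>
    intro n
    have hA : ∀ n' : ℕ, (∑ s ∈ Finset.range (m + 1),
        (-1 : k) ^ s * (m.choose s : k) * ((n' + s).choose i : k))
        = (∑ s ∈ Finset.range m,
            (-1 : k) ^ (s + 1) * (m.choose (s + 1) : k) * ((n' + (s + 1)).choose i : k))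
          + (n'.choose i : k) := by
      intro n'
      rw [Finset.sum_range_succ'
        (fun s => (-1 : k) ^ s * (m.choose s : k) * ((n' + s).choose i : k)) m]
      simp
    have step1 : (∑ s ∈ Finset.range (m + 1 + 1),
        (-1 : k) ^ s * ((m + 1).choose s : k) * ((n + s).choose i : k))
        = (∑ s ∈ Finset.range (m + 1),
            (-1 : k) ^ (s + 1) * ((m + 1).choose (s + 1) : k) * ((n + (s + 1)).choose i : k))
          + (n.choose i : k) := by
      rw [Finset.sum_range_succ'
        (fun s => (-1 : k) ^ s * ((m + 1).choose s : k) * ((n + s).choose i : k)) (m + 1)]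
      simp
    have step2 : (∑ s ∈ Finset.range (m + 1),
        (-1 : k) ^ (s + 1) * ((m + 1).choose (s + 1) : k) * ((n + (s + 1)).choose i : k))
        = (∑ s ∈ Finset.range (m + 1),
            (-1 : k) ^ (s + 1) * (m.choose s : k) * ((n + (s + 1)).choose i : k))
          + (∑ s ∈ Finset.range (m + 1),
            (-1 : k) ^ (s + 1) * (m.choose (s + 1) : k) * ((n + (s + 1)).choose i : k)) := by
      rw [← Finset.sum_add_distrib]
      apply Finset.sum_congr rfl
      intro s _
      have hcc : ((m + 1).choose (s + 1) : k) = (m.choose s : k) + (m.choose (s + 1) : k) := by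
        exact_mod_cast Nat.choose_succ_succ m s
      rw [hcc]; ring
    have hS1 : (∑ s ∈ Finset.range (m + 1),
        (-1 : k) ^ (s + 1) * (m.choose s : k) * ((n + (s + 1)).choose i : k))
        = -(∑ s ∈ Finset.range (m + 1),
            (-1 : k) ^ s * (m.choose s : k) * (((n + 1) + s).choose i : k)) := by
      rw [← Finset.sum_neg_distrib]
      apply Finset.sum_congr rfl
      intro s _
      rw [show (n + 1) + s = n + (s + 1) from by omega]
      ring
    have hS2 : (∑ s ∈ Finset.range (m + 1),
        (-1 : k) ^ (s + 1) * (m.choose (s + 1) : k) * ((n + (s + 1)).choose i : k))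
        = (∑ s ∈ Finset.range m,
            (-1 : k) ^ (s + 1) * (m.choose (s + 1) : k) * ((n + (s + 1)).choose i : k)) := by
      rw [Finset.sum_range_succ]
      simp [Nat.choose_succ_self]
    have key : (∑ s ∈ Finset.range (m + 1 + 1),
        (-1 : k) ^ s * ((m + 1).choose s : k) * ((n + s).choose i : k))
        = (∑ s ∈ Finset.range (m + 1),
            (-1 : k) ^ s * (m.choose s : k) * ((n + s).choose i : k))
          - (∑ s ∈ Finset.range (m + 1),
            (-1 : k) ^ s * (m.choose s : k) * (((n + 1) + s).choose i : k)) := by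
      rw [step1, step2, hS1, hS2, hA n]
      ring
    rw [key, ih n, ih (n + 1)]
    split_ifs with h1 h2
    · have hcc : (n + 1).choose (i - m) = n.choose (i - (m + 1)) + n.choose (i - m) := by
        have h3 : i - m = (i - (m + 1)) + 1 := by omega
        rw [h3]
        exact Nat.choose_succ_succ n _
      push_cast [hcc]
      ring
    · have h3 : i - m = 0 := by omega
      simp [h3]
    · omega
    · ring

lemma comul_reflect (a b : CSeq k V) (n s m : ℕ) (hsm : s ≤ m) :
    comul k V (n + s) b a (m - s) = ∑ i ∈ Finset.range (n + m + 1),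
      ((-1 : k) ^ (n + s) * (-1 : k) ^ i * ((n + s).choose i : k)) • (b i * a (n + m - i)) := by
  rw [comul, ← Finset.sum_range_reflect]
  have hsmall : ∀ i ∈ Finset.range (n + s + 1),
      ((-1 : k) ^ (n + s + 1 - 1 - i) * (((n + s).choose (n + s + 1 - 1 - i)) : k)) •
        (b ((n + s) - (n + s + 1 - 1 - i)) * a ((m - s) + (n + s + 1 - 1 - i)))
      = ((-1 : k) ^ (n + s) * (-1 : k) ^ i * ((n + s).choose i : k)) • (b i * a (n + m - i)) := by
    intro i hi
    have hi' : i ≤ n + s := by simpa [Nat.lt_succ_iff] using hi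
    rw [show n + s + 1 - 1 - i = n + s - i from by omega]
    rw [show (n + s) - (n + s - i) = i from by omega]
    rw [show (m - s) + (n + s - i) = n + m - i from by omega]
    rw [Nat.choose_symm hi', neg_one_pow_sub (n + s) i hi']
  rw [Finset.sum_congr rfl hsmall]
  apply Finset.sum_subset
  · intro x hx
    simp only [Finset.mem_range] at hx ⊢
    omega
  · intro i _ hi
    have : n + s < i := by simpa [Finset.mem_range, Nat.lt_succ_iff] using hi
    rw [Nat.choose_eq_zero_of_lt this]
    simp

lemma cbrace_eq (a b : CSeq k V) (n m : ℕ) :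
    cbrace k V n b a m = ∑ t ∈ Finset.range (n + 1),
      (((-1 : k) ^ t) * (n.choose t : k)) • (b (m + t) * a (n - t)) := by
  rw [cbrace]
  rw [finsum_eq_finset_sum_of_support_subset _ (s := Finset.range (m + 1)) ?hsupp]
  case hsupp =>
    intro s hs
    simp only [Finset.coe_range, Set.mem_Iio]
    by_contra hge
    push_neg at hge
    apply hs
    show ((-1 : k) ^ (n + s) * ((s.factorial : k))⁻¹) • ((cD k V)^[s] (comul k V (n + s) b a)) m = 0
    rw [cD_iterate, Nat.descFactorial_eq_zero_iff_lt.mpr (by omega)]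
    simp
  have step1 : ∀ s ∈ Finset.range (m + 1),
      ((-1 : k) ^ (n + s) * ((s.factorial : k))⁻¹) • ((cD k V)^[s] (comul k V (n + s) b a)) m
      = ∑ i ∈ Finset.range (n + m + 1),
          ((-1 : k) ^ i * ((-1 : k) ^ s * (m.choose s : k) * (((n + s).choose i : k)))) •
            (b i * a (n + m - i)) := by
    intro s hs
    have hsm : s ≤ m := by simpa [Nat.lt_succ_iff] using hs
    rw [cD_iterate, smul_smul, comul_reflect a b n s m hsm, Finset.smul_sum]
    apply Finset.sum_congr rfl
    intro i _
    rw [smul_smul]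
    congr 1
    have hf : (s.factorial : k) ≠ 0 := Nat.cast_ne_zero.mpr s.factorial_ne_zero
    have hd : ((m.descFactorial s : ℕ) : k) = (s.factorial : k) * (m.choose s : k) := by
      exact_mod_cast congrArg (Nat.cast : ℕ → k) (Nat.descFactorial_eq_factorial_mul_choose m s)
    rw [hd]
    calc (-1 : k) ^ (n + s) * ((s.factorial : k))⁻¹ *
          ((-1 : k) ^ s * ((s.factorial : k) * (m.choose s : k))) *
          ((-1 : k) ^ (n + s) * (-1 : k) ^ i * (((n + s).choose i : k)))
        = (((-1 : k)) ^ (n + s) * (-1 : k) ^ (n + s)) *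
            (((s.factorial : k))⁻¹ * (s.factorial : k)) *
            ((-1 : k) ^ i * ((-1 : k) ^ s * (m.choose s : k) * (((n + s).choose i : k)))) := by
          ring
      _ = (-1 : k) ^ i * ((-1 : k) ^ s * (m.choose s : k) * (((n + s).choose i : k))) := by
          rw [neg_one_pow_sq, inv_mul_cancel₀ hf, one_mul, one_mul]
  rw [Finset.sum_congr rfl step1, Finset.sum_comm]
  have step2 : ∀ i ∈ Finset.range (n + m + 1),
      (∑ s ∈ Finset.range (m + 1),
        ((-1 : k) ^ i * ((-1 : k) ^ s * (m.choose s : k) * (((n + s).choose i : k)))) •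
          (b i * a (n + m - i)))
      = (((-1 : k) ^ i * ((-1 : k) ^ m * (if m ≤ i then ((n.choose (i - m) : k)) else 0)))) •
          (b i * a (n + m - i)) := by
    intro i _
    rw [← Finset.sum_smul, ← Finset.mul_sum, KI i m n]
  rw [Finset.sum_congr rfl step2]
  rw [show n + m + 1 = m + (n + 1) from by omega, Finset.sum_range_add]
  have hz : (∑ i ∈ Finset.range m,
      (((-1 : k) ^ i * ((-1 : k) ^ m * (if m ≤ i then ((n.choose (i - m) : k)) else 0)))) •
        (b i * a (n + m - i))) = 0 := by
    apply Finset.sum_eq_zero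
    intro i hi
    have : ¬ (m ≤ i) := by simpa [Finset.mem_range] using Finset.mem_range.mp hi |> Nat.lt_iff_le_and_ne.mp |> fun h => by omega
    rw [if_neg this]
    simp
  rw [hz, zero_add]
  apply Finset.sum_congr rfl
  intro t _
  rw [if_pos (by omega : m ≤ m + t)]
  rw [show m + t - m = t from by omega, show n + m - (m + t) = n - t from by omega]
  congr 1
  calc (-1 : k) ^ (m + t) * ((-1 : k) ^ m * (n.choose t : k))
      = (((-1 : k)) ^ m * (-1 : k) ^ m) * ((-1 : k) ^ t * (n.choose t : k)) := by
        rw [pow_add]; ring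
    _ = (-1 : k) ^ t * (n.choose t : k) := by rw [neg_one_pow_sq, one_mul]

lemma cbrace_eq_sum_adT {a : CSeq k V} (ha : IsCEnd k V a) (b : CSeq k V) (n N m : ℕ)
    (hN : n + 1 ≤ N) :
    cbrace k V n b a m = ∑ t ∈ Finset.range N,
      (((-1 : k) ^ t) * ((t.factorial : k))⁻¹) • (b (m + t) * adT^[t] (a n)) := by
  rw [cbrace_eq, show N = (n + 1) + (N - (n + 1)) from by omega,
    Finset.sum_range_add
      (fun t => (((-1 : k) ^ t) * ((t.factorial : k))⁻¹) • (b (m + t) * adT^[t] (a n)))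
      (n + 1) (N - (n + 1))]
  have hz : ∀ x ∈ Finset.range (N - (n + 1)),
      (((-1 : k) ^ (n + 1 + x)) * (((n + 1 + x).factorial : k))⁻¹) •
        (b (m + (n + 1 + x)) * adT^[n + 1 + x] (a n)) = 0 := by
    intro x _
    rw [adT_iterate ha, Nat.descFactorial_eq_zero_iff_lt.mpr (by omega)]
    simp
  rw [Finset.sum_eq_zero hz, add_zero]
  apply Finset.sum_congr rfl
  intro t ht
  have htn : t ≤ n := by simpa [Nat.lt_succ_iff] using ht
  rw [adT_iterate ha, mul_smul_comm, smul_smul]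
  congr 1
  have hf : (t.factorial : k) ≠ 0 := Nat.cast_ne_zero.mpr t.factorial_ne_zero
  rw [Nat.descFactorial_eq_factorial_mul_choose]
  push_cast
  field_simp

end Aux

/-- If `a, a' ∈ C` and `n, n'` satisfy `a(n) = a'(n')` in `End_k V`, then
`a ∘ₙ b = a' ∘ₙ' b` and `{b ∘ₙ a} = {b ∘ₙ' a'}` for every `b ∈ C`; consequently `A(C)` acts on
`C` as an `A(C)`–`A(C)`-bimodule by `a(n)·b = a ∘ₙ b` and `b·a(n) = {b ∘ₙ a}`. -/
theorem stmt1 (k : Type) [Field k] [IsAlgClosed k] [CharZero k]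
    (V : Type) [AddCommGroup V] [Module k V] [Module (Polynomial k) V]
    [IsScalarTower k (Polynomial k) V] [Module.Finite (Polynomial k) V]
    (C : Set (CSeq k V)) (hC : IsConfSubalgebra k V C)
    (a a' : CSeq k V) (ha : a ∈ C) (ha' : a' ∈ C) (n n' : ℕ)
    (h : a n = a' n') :
    (∀ b ∈ C, comul k V n a b = comul k V n' a' b) ∧
    (∀ b ∈ C, cbrace k V n b a = cbrace k V n' b a') := by
  constructor
  · intro b _
    funext m
    rw [comul_eq_sum_adT (hC.isCEnd a ha) b n (max (n + 1) (n' + 1)) m (le_max_left _ _),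
      comul_eq_sum_adT (hC.isCEnd a' ha') b n' (max (n + 1) (n' + 1)) m (le_max_right _ _), h]
  · intro b _
    funext m
    rw [cbrace_eq_sum_adT (hC.isCEnd a ha) b n (max (n + 1) (n' + 1)) m (le_max_left _ _),
      cbrace_eq_sum_adT (hC.isCEnd a' ha') b n' (max (n + 1) (n' + 1)) m (le_max_right _ _), h]
end

section
/- Let V be a finitely generated H-module and C a conformal subalgebra of Cend V, and write C̃ = F(A(C)). Then C is a two-sided ideal of C̃ (i.e., C̃∘_ωC ⊆ C and C∘_ωC̃ ⊆ C), and moreover C̃∘_ωC̃ ⊆ C. -/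
open Polynomial

/-!
For a translation-invariant sequence `a`, `(a ∘ₙ b)(m) = ∑ₛ ((-1)ˢ / s!) [⋯[a(n), T]⋯, T] b(m+s)`
(`s` brackets), so `a ∘ₙ b` depends on `a` only through the single coefficient `a(n)`. In the same
way the transposed product `m ↦ ∑ₜ (-1)ᵗ C(q,t) c(m+t) b(q-t)` depends on `b` only through `b(q)`.
Since `V` is finitely generated, products in `Cend V` vanish in high degree, so skew-symmetry writes
each of the two kinds of products as a finite combination of `Dˢ` applied to products of the other
kind. Now let `a, b ∈ C̃`, and pick `c, d ∈ C` with `a(n) = c(N)` and `b(q) = d(r)`. Then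
`a ∘ₙ b = c ∘_N b` is a combination of `Dˢ` applied to transposed products of `c` and `b`. These
equal transposed products of `c` and `d`, which lie in `C` by skew-symmetry once more.
-/

open Finset Function

section KernelProduct

variable (k : Type*) {M : Type*} [CommRing k] [AddCommGroup M] [Module k M]

/-- Products `a ∘ₙ b` have kernel `G i j = a i * b j`; the kernel `swap G` gives the transposed
products that occur in skew-symmetry. -/
def kerProd (G : ℕ → ℕ → M) (n m : ℕ) : M :=
  ∑ s ∈ range (n + 1), ((-1 : k) ^ s * (n.choose s : k)) • G (n - s) (m + s)

variable {k}

lemma kerProd_eq_sum_nsmul (G : ℕ → ℕ → M) (n m : ℕ) :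
    kerProd k G n m = ∑ s ∈ range (n + 1), n.choose s • (-1 : k) ^ s • G (n - s) (m + s) := by
  simp only [kerProd, mul_smul, Nat.cast_smul_eq_nsmul,
    smul_comm ((-1 : k) ^ _) (Nat.choose _ _)]

lemma kerProd_succ_right (G : ℕ → ℕ → M) (n m : ℕ) :
    kerProd k G n (m + 1) = kerProd k (fun i j => G i (j + 1)) n m := by
  simp only [kerProd, add_right_comm m 1]

lemma kerProd_succ_left (G : ℕ → ℕ → M) (n m : ℕ) :
    kerProd k G (n + 1) m = kerProd k (fun i j => G (i + 1) j) n m - kerProd k G n (m + 1) := by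
  simp only [kerProd_eq_sum_nsmul, sum_choose_succ_nsmul (fun s r => (-1 : k) ^ s • G r (m + s)),
    sub_eq_add_neg, ← sum_neg_distrib]
  congr 1 <;> refine sum_congr rfl fun s hs => ?_
  · rw [Nat.sub_add_comm (by simpa [Nat.lt_succ_iff] using hs)]
  · rw [pow_succ, mul_neg_one, neg_smul, smul_neg, add_right_comm m 1, add_assoc]

lemma kerProd_swap_zero_right (G : ℕ → ℕ → M) (q : ℕ) :
    kerProd k (swap G) q 0 = (-1 : k) ^ q • kerProd k G q 0 := by
  rw [kerProd, kerProd, smul_sum, ← sum_range_reflect]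
  refine sum_congr rfl fun s hs => ?_
  have hs : s ≤ q := by simpa [Nat.lt_succ_iff] using hs
  obtain ⟨t, rfl⟩ := Nat.exists_eq_add_of_le hs
  simp only [add_tsub_cancel_right, add_tsub_cancel_left, zero_add, swap, smul_smul, pow_add]
  congr 1
  rw [Nat.choose_symm_add]
  linear_combination (-(-1 : k) ^ t * ((s + t).choose t : k)) *
    (Even.neg_one_pow ⟨s, rfl⟩ : (-1 : k) ^ (s + s) = 1)

lemma sum_choose_smul_kerProd (G : ℕ → ℕ → M) (q m : ℕ) :
    ∑ s ∈ range (m + 1), m.choose s • kerProd k G (q + s) (m - s)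
      = (-1 : k) ^ q • kerProd k (swap G) q m := by
  induction m generalizing q G with
  | zero => simp [kerProd_swap_zero_right, smul_smul, ← mul_pow]
  | succ m ih =>
    have h₁ : ∑ s ∈ range (m + 1), m.choose s • kerProd k G (q + s) (m + 1 - s)
        = (-1 : k) ^ q • kerProd k (fun i j => swap G (i + 1) j) q m := by
      rw [← ih (fun i j => G i (j + 1))]
      refine sum_congr rfl fun s hs => ?_
      rw [Nat.sub_add_comm (by simpa [Nat.lt_succ_iff] using hs), kerProd_succ_right]
    have h₂ : ∑ s ∈ range (m + 1), m.choose s • kerProd k G (q + (s + 1)) (m - s)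
        = (-1 : k) ^ (q + 1) • kerProd k (swap G) (q + 1) m := by
      simpa only [add_right_comm q, add_assoc] using ih G (q + 1)
    rw [sum_choose_succ_nsmul (fun s r => kerProd k G (q + s) r), h₁, h₂, kerProd_succ_left,
      pow_succ, mul_neg_one, neg_smul, smul_sub]
    abel

end KernelProduct

section TransInv

variable (k : Type*) {A : Type*} [CommRing k] [Ring A] [Algebra k A]

def bracketRight (T : A) : A →ₗ[k] A :=
  LinearMap.mulRight k T - LinearMap.mulLeft k T

def IsTransInv (T : A) (a : ℕ → A) : Prop :=
  ∀ n, a n * T - T * a n = (n : k) • a (n - 1)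

variable {k} {T : A} {a b : ℕ → A}

lemma bracketRight_apply (T x : A) : bracketRight k T x = x * T - T * x := rfl

lemma bracketRight_mul (T x y : A) :
    bracketRight k T (x * y) = bracketRight k T x * y + x * bracketRight k T y := by
  simp only [bracketRight_apply]
  noncomm_ring

lemma IsTransInv.iterate_bracketRight (ha : IsTransInv k T a) (n s : ℕ) :
    (bracketRight k T)^[s] (a n) = (n.descFactorial s : k) • a (n - s) := by
  induction s with
  | zero => simp
  | succ s ih =>
    rw [iterate_succ_apply', ih, map_smul, bracketRight_apply, ha, smul_smul,
      Nat.descFactorial_succ, Nat.sub_sub, Nat.cast_mul, mul_comm]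

lemma IsTransInv.kerProd_mul (ha : IsTransInv k T a) (hb : IsTransInv k T b) (n : ℕ) :
    IsTransInv k T (kerProd k (fun i j => a i * b j) n) := by
  intro m
  -- `m + s - 1` truncates only where the coefficient `m + s` of `z s` below vanishes
  set z : ℕ → A := fun s => a (n - s) * b (m + s - 1)
  have hterm : ∀ s, bracketRight k T (a (n - s) * b (m + s))
      = ((n - s : ℕ) : k) • z (s + 1) + ((m + s : ℕ) : k) • z s := by
    intro s
    rw [bracketRight_mul, bracketRight_apply, bracketRight_apply, ha, hb, smul_mul_assoc,
      mul_smul_comm]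
    simp only [z, Nat.sub_sub, add_tsub_cancel_right, ← add_assoc]
  have hshift : ∑ s ∈ range (n + 1), ((-1 : k) ^ s * n.choose s) • ((n - s : ℕ) : k) • z (s + 1)
      = -∑ s ∈ range (n + 1), ((-1 : k) ^ s * n.choose s) • (s : k) • z s := by
    set f : ℕ → A := fun s => ((-1 : k) ^ s * n.choose s) • (s : k) • z s
    have hcoef : ∀ s,
        ((-1 : k) ^ s * n.choose s) • ((n - s : ℕ) : k) • z (s + 1) = -f (s + 1) := by
      intro s
      have h := congrArg (Nat.cast (R := k)) (Nat.choose_succ_right_eq n s)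
      push_cast at h
      simp only [f, smul_smul, ← neg_smul]
      congr 1
      push_cast
      linear_combination (-(-1 : k) ^ s) * h
    calc ∑ s ∈ range (n + 1), ((-1 : k) ^ s * n.choose s) • ((n - s : ℕ) : k) • z (s + 1)
        = -(∑ s ∈ range (n + 1), f (s + 1) + f 0) := by
          simp [f, hcoef]
      _ = -(∑ s ∈ range (n + 1), f s + f (n + 1)) := by
          rw [← sum_range_succ', sum_range_succ]
      _ = -∑ s ∈ range (n + 1), f s := by simp [f]
  have hz : (m : k) • ∑ s ∈ range (n + 1), ((-1 : k) ^ s * n.choose s) • z s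
      = (m : k) • kerProd k (fun i j => a i * b j) n (m - 1) := by
    rcases Nat.eq_zero_or_pos m with rfl | hm
    · simp
    · congr 1
      refine sum_congr rfl fun s _ => ?_
      simp only [z]
      rw [Nat.sub_add_comm hm]
  rw [← bracketRight_apply (k := k), kerProd, map_sum, ← hz]
  simp only [map_smul, hterm, smul_add, sum_add_distrib]
  rw [hshift, neg_add_eq_sub, ← sum_sub_distrib, smul_sum]
  refine sum_congr rfl fun s _ => ?_
  rw [smul_smul, smul_smul, smul_smul, ← sub_smul]
  push_cast
  ring_nf

end TransInv

section Collapse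

variable {k A M : Type*} [Field k] [CharZero k] [Ring A] [Algebra k A]
  [AddCommGroup M] [Module k M] {T : A} {a b c d : ℕ → A}

lemma IsTransInv.sum_choose_smul_eq_sum_iterate (ha : IsTransInv k T a) (φ : ℕ → A →ₗ[k] M)
    {n Q : ℕ} (hQ : n ≤ Q) :
    ∑ s ∈ range (n + 1), ((-1 : k) ^ s * n.choose s) • φ s (a (n - s))
      = ∑ s ∈ range (Q + 1),
          ((-1 : k) ^ s * (s.factorial : k)⁻¹) • φ s ((bracketRight k T)^[s] (a n)) := by
  have hterm : ∀ s, ((-1 : k) ^ s * (s.factorial : k)⁻¹) • φ s ((bracketRight k T)^[s] (a n))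
      = ((-1 : k) ^ s * n.choose s) • φ s (a (n - s)) := by
    intro s
    rw [ha.iterate_bracketRight, map_smul, smul_smul, Nat.descFactorial_eq_factorial_mul_choose,
      Nat.cast_mul, mul_assoc, inv_mul_cancel_left₀ (Nat.cast_ne_zero.mpr s.factorial_ne_zero)]
  simp only [hterm]
  refine sum_subset (range_subset_range.mpr (by omega)) fun s _ hs => ?_
  rw [Nat.choose_eq_zero_of_lt (by simpa using hs), Nat.cast_zero, mul_zero, zero_smul]

lemma IsTransInv.sum_choose_smul_congr (ha : IsTransInv k T a) (hc : IsTransInv k T c)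
    (φ : ℕ → A →ₗ[k] M) {n N : ℕ} (h : a n = c N) :
    ∑ s ∈ range (n + 1), ((-1 : k) ^ s * n.choose s) • φ s (a (n - s))
      = ∑ s ∈ range (N + 1), ((-1 : k) ^ s * N.choose s) • φ s (c (N - s)) := by
  rw [ha.sum_choose_smul_eq_sum_iterate φ (le_max_left n N),
    hc.sum_choose_smul_eq_sum_iterate φ (le_max_right n N), h]

lemma IsTransInv.kerProd_mul_congr_left (ha : IsTransInv k T a) (hc : IsTransInv k T c)
    (b : ℕ → A) {n N : ℕ} (h : a n = c N) :
    kerProd k (fun i j => a i * b j) n = kerProd k (fun i j => c i * b j) N :=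
  funext fun m => ha.sum_choose_smul_congr hc (fun s => LinearMap.mulRight k (b (m + s))) h

lemma IsTransInv.kerProd_swap_mul_congr_right (hb : IsTransInv k T b) (hd : IsTransInv k T d)
    (c : ℕ → A) {q r : ℕ} (h : b q = d r) :
    kerProd k (swap fun i j => c i * b j) q = kerProd k (swap fun i j => c i * d j) r :=
  funext fun m => hb.sum_choose_smul_congr hd (fun s => LinearMap.mulLeft k (c (m + s))) h

end Collapse

section ConformalEndomorphisms

variable {k : Type} [Field k] {V : Type} [AddCommGroup V] [Module k V]

lemma comul_eq_kerProd (n : ℕ) (a b : CSeq k V) :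
    comul k V n a b = kerProd k (fun i j => a i * b j) n := rfl

lemma cD_iterate_apply (f : CSeq k V) (s m : ℕ) :
    (cD k V)^[s] f m = ((-1 : k) ^ s * m.descFactorial s) • f (m - s) := by
  induction s generalizing m with
  | zero => simp
  | succ s ih =>
    rw [iterate_succ_apply', cD, ih, smul_smul, ← neg_smul, Nat.sub_sub, add_comm 1 s]
    congr 1
    cases m with
    | zero => simp
    | succ m =>
      rw [Nat.succ_descFactorial_succ, Nat.add_sub_cancel]
      push_cast
      ring

/-- Skew-symmetry in `Cend V`, written in coefficients. -/
lemma kerProd_swap_eq_sum_cD [CharZero k] (G : ℕ → ℕ → Module.End k V) {P : ℕ}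
    (hP : ∀ p ≥ P, kerProd k G p = 0) (q : ℕ) :
    kerProd k (swap G) q = (-1 : k) ^ q • ∑ s ∈ range (P + 1),
      ((-1 : k) ^ s * (s.factorial : k)⁻¹) • (cD k V)^[s] (kerProd k G (q + s)) := by
  funext m
  have hterm : ∀ s,
      (((-1 : k) ^ s * (s.factorial : k)⁻¹) • (cD k V)^[s] (kerProd k G (q + s))) m
        = m.choose s • kerProd k G (q + s) (m - s) := by
    intro s
    rw [Pi.smul_apply, cD_iterate_apply, smul_smul, Nat.descFactorial_eq_factorial_mul_choose,
      Nat.cast_mul, ← Nat.cast_smul_eq_nsmul k]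
    congr 1
    rw [mul_mul_mul_comm, ← mul_pow, neg_one_mul, neg_neg, one_pow, one_mul,
      inv_mul_cancel_left₀ (Nat.cast_ne_zero.mpr s.factorial_ne_zero)]
  have hsum : ∑ s ∈ range (P + 1), m.choose s • kerProd k G (q + s) (m - s)
      = ∑ s ∈ range (m + 1), m.choose s • kerProd k G (q + s) (m - s) := by
    rw [sum_subset (range_subset_range.mpr (by omega : P + 1 ≤ m + P + 1)),
      ← sum_subset (range_subset_range.mpr (by omega : m + 1 ≤ m + P + 1))]
    · intro s _ hs
      rw [Nat.choose_eq_zero_of_lt (by simpa using hs), zero_smul]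
    · intro s _ hs
      rw [hP (q + s) (by simp at hs; omega), Pi.zero_apply, smul_zero]
  rw [Pi.smul_apply, Finset.sum_apply, sum_congr rfl fun s _ => hterm s, hsum,
    sum_choose_smul_kerProd, smul_smul, ← mul_pow, neg_one_mul, neg_neg, one_pow, one_smul]

lemma kerProd_swap_eq_zero_of_ge [CharZero k] (G : ℕ → ℕ → Module.End k V) {P : ℕ}
    (hP : ∀ p ≥ P, kerProd k G p = 0) {q : ℕ} (hq : P ≤ q) :
    kerProd k (swap G) q = 0 := by
  rw [kerProd_swap_eq_sum_cD G hP, sum_eq_zero, smul_zero]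
  intro s _
  funext m
  rw [Pi.smul_apply, cD_iterate_apply, hP (q + s) (by omega)]
  simp

lemma exists_comul_apply_eq_zero {a b : CSeq k V} (ha : ∀ u : V, ∃ N, ∀ n ≥ N, a n u = 0)
    (hb : ∀ u : V, ∃ N, ∀ n ≥ N, b n u = 0) (u : V) :
    ∃ P, ∀ p ≥ P, ∀ m, comul k V p a b m u = 0 := by
  obtain ⟨Nb, hNb⟩ := hb u
  choose Na hNa using ha
  refine ⟨(range Nb).sup (fun j => Na (b j u)) + Nb, fun p hp m => ?_⟩
  simp only [comul, LinearMap.sum_apply, LinearMap.smul_apply, Module.End.mul_apply]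
  refine sum_eq_zero fun s _ => ?_
  by_cases h : m + s < Nb
  · have := le_sup (f := fun j => Na (b j u)) (mem_range.mpr h)
    rw [hNa _ (p - s) (by omega), smul_zero]
  · rw [hNb _ (by omega), map_zero, smul_zero]

end ConformalEndomorphisms

lemma Submodule.smul_mem_of_X_smul_mem {k V : Type*} [CommSemiring k] [AddCommMonoid V]
    [Module k V] [Module k[X] V] [IsScalarTower k k[X] V] (W : Submodule k V)
    (hW : ∀ v ∈ W, (X : k[X]) • v ∈ W) (r : k[X]) {v : V} (hv : v ∈ W) : r • v ∈ W := by
  induction r using Polynomial.induction_on generalizing v with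
  | C c => simpa only [← Polynomial.algebraMap_eq, algebraMap_smul] using W.smul_mem c hv
  | add p q hp hq => simpa only [add_smul] using W.add_mem (hp hv) (hq hv)
  | monomial n c h =>
    rw [pow_succ, ← mul_assoc, mul_smul]
    exact h (hW v hv)

section Locality

variable {k : Type} [Field k] {V : Type} [AddCommGroup V] [Module k V] [Module k[X] V]
  [IsScalarTower k k[X] V]

lemma IsCEnd.isTransInv {a : CSeq k V} (ha : IsCEnd k V a) : IsTransInv k (Tact k V) a := ha.2

lemma IsTransInv.apply_Tact_eq_zero {f : CSeq k V} (hf : IsTransInv k (Tact k V) f) {v : V}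
    (hv : ∀ m, f m v = 0) (m : ℕ) : f m (Tact k V v) = 0 := by
  have h := congrArg (· v) (hf m)
  simpa only [LinearMap.sub_apply, Module.End.mul_apply, LinearMap.smul_apply, hv, map_zero,
    sub_zero, smul_zero] using h

lemma exists_comul_eq_zero [Module.Finite k[X] V] {a b : CSeq k V} (ha : IsCEnd k V a)
    (hb : IsCEnd k V b) : ∃ P, ∀ p ≥ P, comul k V p a b = 0 := by
  obtain ⟨S, hS⟩ := Module.Finite.fg_top (R := k[X]) (M := V)
  choose P hP using exists_comul_apply_eq_zero ha.1 hb.1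
  obtain ⟨N, hN⟩ := (S.image P).exists_le
  let W : Submodule k V := ⨅ p ≥ N, ⨅ m, LinearMap.ker (comul k V p a b m)
  have hmemW : ∀ v, v ∈ W ↔ ∀ p ≥ N, ∀ m, comul k V p a b m v = 0 := by
    simp [W]
  have hXW : ∀ v ∈ W, (X : k[X]) • v ∈ W := fun v hv => (hmemW _).mpr fun p hp =>
    (ha.isTransInv.kerProd_mul hb.isTransInv p).apply_Tact_eq_zero ((hmemW v).mp hv p hp)
  have hW : ∀ v, v ∈ W := by
    intro v
    have hv : v ∈ Submodule.span k[X] (S : Set V) := hS ▸ Submodule.mem_top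
    induction hv using Submodule.span_induction with
    | mem u hu => exact (hmemW u).mpr fun p hp => hP u p ((hN _ (mem_image_of_mem P hu)).trans hp)
    | zero => exact W.zero_mem
    | add u w _ _ hu hw => exact W.add_mem hu hw
    | smul r u _ hu => exact W.smul_mem_of_X_smul_mem hXW r hu
  exact ⟨N, fun p hp => funext fun m => LinearMap.ext fun v => (hmemW v).mp (hW v) p hp m⟩

end Locality

namespace IsConfSubalgebra

variable {k : Type} [Field k] {V : Type} [AddCommGroup V] [Module k V] [Module k[X] V]
  [IsScalarTower k k[X] V] {C : Set (CSeq k V)}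

def toSubmodule (hC : IsConfSubalgebra k V C) : Submodule k (CSeq k V) where
  carrier := C
  add_mem' ha hb := hC.add_mem _ ha _ hb
  zero_mem' := hC.zero_mem
  smul_mem' := hC.smul_mem

lemma subset_setF_setA (hC : IsConfSubalgebra k V C) : C ⊆ setF k V (setA k V C) :=
  fun a ha => ⟨hC.isCEnd a ha, fun n => ⟨a, ha, n, rfl⟩⟩

lemma omegaMulSet_subset (hC : IsConfSubalgebra k V C) {A B : Set (CSeq k V)}
    (h : ∀ a ∈ A, ∀ b ∈ B, ∀ n, comul k V n a b ∈ C) : omegaMulSet k V A B ⊆ C :=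
  (Submodule.span_le (p := hC.toSubmodule)).mpr <| by
    rintro _ ⟨a, ha, b, hb, n, rfl⟩
    exact h a ha b hb n

lemma cD_iterate_mem (hC : IsConfSubalgebra k V C) {a : CSeq k V} (ha : a ∈ C) (s : ℕ) :
    (cD k V)^[s] a ∈ C := by
  induction s with
  | zero => exact ha
  | succ s ih => exact iterate_succ_apply' (cD k V) s a ▸ hC.cD_mem _ ih

lemma sum_cD_iterate_mem (hC : IsConfSubalgebra k V C) {f : ℕ → CSeq k V} (hf : ∀ s, f s ∈ C)
    (q P : ℕ) :
    (-1 : k) ^ q • ∑ s ∈ range (P + 1),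
      ((-1 : k) ^ s * (s.factorial : k)⁻¹) • (cD k V)^[s] (f s) ∈ C :=
  hC.toSubmodule.smul_mem _ <| hC.toSubmodule.sum_mem fun s _ =>
    hC.toSubmodule.smul_mem _ (hC.cD_iterate_mem (hf s) s)

variable [CharZero k] [Module.Finite k[X] V]

lemma kerProd_swap_mul_mem (hC : IsConfSubalgebra k V C) {c d : CSeq k V} (hc : c ∈ C)
    (hd : d ∈ C) (q : ℕ) :
    kerProd k (swap fun i j => c i * d j) q ∈ C := by
  obtain ⟨P, hP⟩ := exists_comul_eq_zero (hC.isCEnd c hc) (hC.isCEnd d hd)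
  rw [kerProd_swap_eq_sum_cD _ hP]
  exact hC.sum_cD_iterate_mem (fun s => hC.comul_mem c hc d hd (q + s)) q P

lemma comul_mem_of_mem_setF_right (hC : IsConfSubalgebra k V C) {c b : CSeq k V} (hc : c ∈ C)
    (hb : b ∈ setF k V (setA k V C)) (n : ℕ) : comul k V n c b ∈ C := by
  obtain ⟨P, hP⟩ := exists_comul_eq_zero (hC.isCEnd c hc) hb.1
  change kerProd k (swap (swap fun i j => c i * b j)) n ∈ C
  rw [kerProd_swap_eq_sum_cD _ (fun p => kerProd_swap_eq_zero_of_ge _ hP) n]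
  refine hC.sum_cD_iterate_mem (fun s => ?_) n P
  obtain ⟨d, hd, r, hdr⟩ := hb.2 (n + s)
  rw [hb.1.isTransInv.kerProd_swap_mul_congr_right (hC.isCEnd d hd).isTransInv c hdr.symm]
  exact hC.kerProd_swap_mul_mem hc hd r

lemma comul_mem_of_mem_setF (hC : IsConfSubalgebra k V C) {a b : CSeq k V}
    (ha : a ∈ setF k V (setA k V C)) (hb : b ∈ setF k V (setA k V C)) (n : ℕ) :
    comul k V n a b ∈ C := by
  obtain ⟨c, hc, N, hcN⟩ := ha.2 n
  rw [comul_eq_kerProd,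
    ha.1.isTransInv.kerProd_mul_congr_left (hC.isCEnd c hc).isTransInv _ hcN.symm]
  exact hC.comul_mem_of_mem_setF_right hc hb N

end IsConfSubalgebra

theorem stmt2_general (k : Type) [Field k] [CharZero k]
    (V : Type) [AddCommGroup V] [Module k V] [Module (Polynomial k) V]
    [IsScalarTower k (Polynomial k) V] [Module.Finite (Polynomial k) V]
    (C : Set (CSeq k V)) (hC : IsConfSubalgebra k V C) :
    C ⊆ setF k V (setA k V C) ∧
    omegaMulSet k V (setF k V (setA k V C)) C ⊆ C ∧
    omegaMulSet k V C (setF k V (setA k V C)) ⊆ C ∧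
    omegaMulSet k V (setF k V (setA k V C)) (setF k V (setA k V C)) ⊆ C := by
  have hsub := hC.subset_setF_setA
  have hmul : ∀ a ∈ setF k V (setA k V C), ∀ b ∈ setF k V (setA k V C), ∀ n,
      comul k V n a b ∈ C := fun a ha b hb => hC.comul_mem_of_mem_setF ha hb
  exact ⟨hsub, hC.omegaMulSet_subset fun a ha b hb => hmul a ha b (hsub hb),
    hC.omegaMulSet_subset fun a ha b hb => hmul a (hsub ha) b hb, hC.omegaMulSet_subset hmul⟩

/-- `C` is a two-sided ideal of `C̃ = F(A(C))`, and moreover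
`C̃ ∘_ω C̃ ⊆ C`. -/
theorem stmt2 (k : Type) [Field k] [IsAlgClosed k] [CharZero k]
    (V : Type) [AddCommGroup V] [Module k V] [Module (Polynomial k) V]
    [IsScalarTower k (Polynomial k) V] [Module.Finite (Polynomial k) V]
    (C : Set (CSeq k V)) (hC : IsConfSubalgebra k V C) :
    C ⊆ setF k V (setA k V C) ∧
    omegaMulSet k V (setF k V (setA k V C)) C ⊆ C ∧
    omegaMulSet k V C (setF k V (setA k V C)) ⊆ C ∧
    omegaMulSet k V (setF k V (setA k V C)) (setF k V (setA k V C)) ⊆ C :=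
  stmt2_general k V C hC
end

section
/- Let C ⊆ Cend_2 be the conformal subalgebra spanned over k by the elements (v−D)^k·a(f,g) for k ∈ ℕ and f,g ∈ k[v], and let R be the k-span of {(v−D)^k·a(0,g) : k ∈ ℕ, g ∈ k[v]} (the maximal nilpotent ideal of C). Then the map θ: C → Cend_1 = k[D,v] defined by θ(Σ_k (v−D)^k·a(f_k,g_k)) = Σ_k f_k(v)·(v−D)^{k+2} is a well-defined H-linear homomorphism of conformal algebras (θ(x∘ₙy) = θ(x)∘ₙθ(y)), its image is Cend_{1,v²} := k[D,v]·(v−D)², and its kernel is R; consequently C/R is isomorphic as a conformal algebra to Cend_{1,v²}. -/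
section Concrete

/- We identify `Cend₁ = k[D,v]` with `Polynomial (Polynomial k)`: the outer variable is `D`,
the inner variable is `v`. -/

variable (k : Type) [Field k]

/-- The `n`-th product on `Cend₁ = k[D,v]`:
`(Dⁱ f) ∘ₙ (Dʲ g) = (-1)ⁱ (n)ᵢ ∑_{s=0}^{j} C(j,s) (n-i)ₛ D^{j-s} (f · ∂ᵥ^{n-i-s} g)`
(summands with `n - i - s < 0` vanish, which is accounted for by the vanishing
falling factorials). -/
noncomputable def omulP (n : ℕ) (a b : Polynomial (Polynomial k)) :
    Polynomial (Polynomial k) :=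
  a.sum fun i f => b.sum fun j g =>
    ∑ s ∈ Finset.range (j + 1),
      (((-1 : k) ^ i * (n.descFactorial i : k)) *
        ((j.choose s : k) * ((n - i).descFactorial s : k))) •
        Polynomial.monomial (j - s) (f * (Polynomial.derivative^[n - i - s] g))

/-- `Cend₂ = M₂(k[D,v])`. -/
abbrev Cend2 := Matrix (Fin 2) (Fin 2) (Polynomial (Polynomial k))

/-- The `n`-th product on `Cend₂`: matrix multiplication combined entrywise with `∘ₙ`. -/
noncomputable def omulM (n : ℕ) (A B : Cend2 k) : Cend2 k :=
  Matrix.of fun i l => ∑ j, omulP k n (A i j) (B j l)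

/-- The element `v - D ∈ k[D,v]`. -/
noncomputable def vD : Polynomial (Polynomial k) :=
  Polynomial.C (Polynomial.X : Polynomial k) - Polynomial.X

/-- The matrix `a(f,g)` with rows `(v²f, v²f + v²g(v-D)²)` and `(0, f(v-D)²)`. -/
noncomputable def aMat (f g : Polynomial k) : Cend2 k :=
  !![Polynomial.C (Polynomial.X ^ 2 * f),
      Polynomial.C (Polynomial.X ^ 2 * f) + Polynomial.C (Polynomial.X ^ 2 * g) * (vD k) ^ 2;
     0, Polynomial.C f * (vD k) ^ 2]

/-- The conformal algebra `C ⊆ Cend₂`: the `k`-span of the elements `(v-D)^m • a(f,g)`. -/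
noncomputable def Cset : Set (Cend2 k) :=
  (Submodule.span k {x : Cend2 k |
    ∃ (m : ℕ) (f g : Polynomial k), x = (vD k) ^ m • aMat k f g} : Submodule k (Cend2 k))

/-- The set `R ⊆ C`: the `k`-span of the elements `(v-D)^m • a(0,g)`. -/
noncomputable def Rset : Set (Cend2 k) :=
  (Submodule.span k {x : Cend2 k |
    ∃ (m : ℕ) (g : Polynomial k), x = (vD k) ^ m • aMat k 0 g} : Submodule k (Cend2 k))

/-- `S` is a conformal subalgebra of `Cend₂`: an `H`-submodule (`D` acts by multiplication)
closed under all `n`-th products. -/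
structure IsSubalg2 (S : Set (Cend2 k)) : Prop where
  zero_mem : (0 : Cend2 k) ∈ S
  add_mem : ∀ a ∈ S, ∀ b ∈ S, a + b ∈ S
  smul_mem : ∀ (r : k), ∀ a ∈ S, r • a ∈ S
  D_mem : ∀ a ∈ S, (Polynomial.X : Polynomial (Polynomial k)) • a ∈ S
  omul_mem : ∀ a ∈ S, ∀ b ∈ S, ∀ n : ℕ, omulM k n a b ∈ S

/-- `I` is an ideal of the conformal subalgebra `S ⊆ Cend₂`. -/
structure IsIdeal2 (S I : Set (Cend2 k)) : Prop where
  subset : I ⊆ S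
  zero_mem : (0 : Cend2 k) ∈ I
  add_mem : ∀ a ∈ I, ∀ b ∈ I, a + b ∈ I
  smul_mem : ∀ (r : k), ∀ a ∈ I, r • a ∈ I
  D_mem : ∀ a ∈ I, (Polynomial.X : Polynomial (Polynomial k)) • a ∈ I
  omul_mem_left : ∀ a ∈ S, ∀ b ∈ I, ∀ n : ℕ, omulM k n a b ∈ I
  omul_mem_right : ∀ a ∈ S, ∀ b ∈ I, ∀ n : ℕ, omulM k n b a ∈ I

/-- The `k`-span `A ∘_ω B` in `Cend₂`. -/
noncomputable def omegaMul2 (A B : Set (Cend2 k)) : Set (Cend2 k) :=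
  (Submodule.span k {y : Cend2 k |
    ∃ a ∈ A, ∃ b ∈ B, ∃ n : ℕ, y = omulM k n a b} : Submodule k (Cend2 k))

/-- Powers `I⁽¹⁾ = I`, `I⁽ᵐ⁺¹⁾ = I⁽ᵐ⁾ ∘_ω I` in `Cend₂`. -/
noncomputable def idealPow2 (I : Set (Cend2 k)) : ℕ → Set (Cend2 k)
  | 0 => I
  | m + 1 => omegaMul2 k (idealPow2 I m) I

/-- The powers of `I` are eventually zero. -/
def IsNilpotent2 (I : Set (Cend2 k)) : Prop :=
  ∃ m : ℕ, ∀ m' ≥ m, idealPow2 k I m' ⊆ {0}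

end Concrete

section Aux

variable (k : Type) [Field k]

open Polynomial

/-- The auxiliary linear-in-`p` matrix `ψ(p) = !![v²p, v²p; 0, p(v-D)²]`. -/
noncomputable def psiM (p : Polynomial (Polynomial k)) : Cend2 k :=
  !![Polynomial.C (Polynomial.X ^ 2) * p, Polynomial.C (Polynomial.X ^ 2) * p;
     0, p * (vD k) ^ 2]

lemma psiM_apply11 (p : Polynomial (Polynomial k)) : psiM k p 1 1 = p * (vD k) ^ 2 := by
  simp [psiM]

lemma psiM_add (p q : Polynomial (Polynomial k)) : psiM k (p + q) = psiM k p + psiM k q := by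
  refine Matrix.ext fun i j => ?_
  fin_cases i <;> fin_cases j <;> simp [psiM, Matrix.add_apply] <;> ring

lemma psiM_smul (r : k) (p : Polynomial (Polynomial k)) : psiM k (r • p) = r • psiM k p := by
  refine Matrix.ext fun i j => ?_
  fin_cases i <;> fin_cases j <;>
    simp [psiM, Matrix.smul_apply, mul_smul_comm, smul_mul_assoc]

lemma psiM_zero : psiM k 0 = 0 := by
  refine Matrix.ext fun i j => ?_
  fin_cases i <;> fin_cases j <;> simp [psiM]

lemma psiM_gen (m : ℕ) (f : Polynomial k) :
    psiM k (Polynomial.C f * (vD k) ^ m) = (vD k) ^ m • aMat k f 0 := by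
  refine Matrix.ext fun i j => ?_
  fin_cases i <;> fin_cases j <;>
    simp [psiM, aMat, Matrix.smul_apply, smul_eq_mul, map_mul] <;> ring

lemma aMat_split (f g : Polynomial k) : aMat k f g = aMat k f 0 + aMat k 0 g := by
  refine Matrix.ext fun i j => ?_
  fin_cases i <;> fin_cases j <;> simp [aMat, Matrix.add_apply]

lemma vD_ne_zero : vD k ≠ 0 := by
  intro h
  have h1 : (vD k).coeff 1 = -1 := by
    rw [vD, Polynomial.coeff_sub, Polynomial.coeff_C, Polynomial.coeff_X_one]
    simp
  rw [h, Polynomial.coeff_zero] at h1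
  have h2 : (1 : Polynomial k) = 0 := by rw [← neg_eq_zero]; exact h1.symm
  exact one_ne_zero h2

/-- generators `C f · (v-D)^m` span all of `k[D,v]` over `k`. -/
lemma span_gens_top :
    (Submodule.span k {p : Polynomial (Polynomial k) |
      ∃ (m : ℕ) (f : Polynomial k), p = Polynomial.C f * (vD k) ^ m}) = ⊤ := by
  set S := Submodule.span k {p : Polynomial (Polynomial k) |
      ∃ (m : ℕ) (f : Polynomial k), p = Polynomial.C f * (vD k) ^ m} with hS
  have hX : ∀ p ∈ S, (Polynomial.X : Polynomial (Polynomial k)) * p ∈ S := by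
    intro p hp
    refine Submodule.span_induction ?_ ?_ ?_ ?_ hp
    · rintro x ⟨m, f, rfl⟩
      have hXeq : (Polynomial.X : Polynomial (Polynomial k)) =
          Polynomial.C Polynomial.X - vD k := by simp [vD]
      have : (Polynomial.X : Polynomial (Polynomial k)) * (Polynomial.C f * (vD k) ^ m) =
          Polynomial.C (Polynomial.X * f) * (vD k) ^ m
            - Polynomial.C f * (vD k) ^ (m + 1) := by
        rw [hXeq, map_mul]; ring
      rw [this]
      exact sub_mem (Submodule.subset_span ⟨m, _, rfl⟩)
        (Submodule.subset_span ⟨m + 1, _, rfl⟩)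
    · simp
    · intro x y _ _ hx hy
      rw [mul_add]; exact add_mem hx hy
    · intro a x _ hx
      rw [mul_smul_comm]; exact Submodule.smul_mem _ _ hx
  have hmono : ∀ (n : ℕ) (a : Polynomial k), (Polynomial.monomial n a :
      Polynomial (Polynomial k)) ∈ S := by
    intro n
    induction n with
    | zero =>
      intro a
      have : (Polynomial.monomial 0 a : Polynomial (Polynomial k)) =
          Polynomial.C a * (vD k) ^ 0 := by
        rw [pow_zero, mul_one, Polynomial.monomial_zero_left]
      rw [this]; exact Submodule.subset_span ⟨0, a, rfl⟩
    | succ n ih =>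
      intro a
      have : (Polynomial.monomial (n + 1) a : Polynomial (Polynomial k)) =
          Polynomial.X * Polynomial.monomial n a := by
        rw [Polynomial.X_mul_monomial]
      rw [this]
      exact hX _ (ih a)
  have hall : ∀ p : Polynomial (Polynomial k), p ∈ S := by
    intro p
    induction p using Polynomial.induction_on' with
    | add p q hp hq => exact add_mem hp hq
    | monomial n a => exact hmono n a
  rw [eq_top_iff]
  exact fun p _ => hall p

/-- every element of `Cset` decomposes as `ψ p + r` with `r ∈ Rset`. -/
lemma Cset_decomp : ∀ x ∈ Cset k, ∃ p : Polynomial (Polynomial k),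
    ∃ r ∈ Rset k, x = psiM k p + r := by
  intro x hx
  refine Submodule.span_induction ?_ ?_ ?_ ?_ hx
  · rintro y ⟨m, f, g, rfl⟩
    refine ⟨Polynomial.C f * (vD k) ^ m, (vD k) ^ m • aMat k 0 g,
      Submodule.subset_span ⟨m, g, rfl⟩, ?_⟩
    rw [psiM_gen, aMat_split, smul_add]
  · exact ⟨0, 0, Submodule.zero_mem _, by rw [psiM_zero, add_zero]⟩
  · rintro a b _ _ ⟨p, r, hr, rfl⟩ ⟨q, s, hs, rfl⟩
    exact ⟨p + q, r + s, Submodule.add_mem _ hr hs, by rw [psiM_add]; abel⟩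
  · rintro c a _ ⟨p, r, hr, rfl⟩
    exact ⟨c • p, c • r, Submodule.smul_mem _ _ hr, by rw [psiM_smul, smul_add]⟩

/-- elements of `Rset` have vanishing `(1,1)` entry. -/
lemma Rset_entry11 : ∀ x ∈ Rset k, x 1 1 = 0 := by
  intro x hx
  refine Submodule.span_induction ?_ ?_ ?_ ?_ hx
  · rintro y ⟨m, g, rfl⟩
    simp [aMat, Matrix.smul_apply]
  · simp
  · intro a b _ _ ha hb; simp [Matrix.add_apply, ha, hb]
  · intro c a _ ha; simp [Matrix.smul_apply, ha]

/-- elements of `Cset` have vanishing `(1,0)` entry. -/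
lemma Cset_entry10 : ∀ x ∈ Cset k, x 1 0 = 0 := by
  intro x hx
  refine Submodule.span_induction ?_ ?_ ?_ ?_ hx
  · rintro y ⟨m, f, g, rfl⟩
    simp [aMat, Matrix.smul_apply]
  · simp
  · intro a b _ _ ha hb; simp [Matrix.add_apply, ha, hb]
  · intro c a _ ha; simp [Matrix.smul_apply, ha]

lemma omulP_zero_left (n : ℕ) (b : Polynomial (Polynomial k)) : omulP k n 0 b = 0 := by
  simp [omulP]

lemma psiM_mem_Cset (p : Polynomial (Polynomial k)) : psiM k p ∈ Cset k := by
  have hp : p ∈ Submodule.span k {q : Polynomial (Polynomial k) |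
      ∃ (m : ℕ) (f : Polynomial k), q = Polynomial.C f * (vD k) ^ m} := by
    rw [span_gens_top]; trivial
  refine Submodule.span_induction ?_ ?_ ?_ ?_ hp
  · rintro q ⟨m, f, rfl⟩
    rw [psiM_gen]
    exact Submodule.subset_span ⟨m, f, 0, rfl⟩
  · rw [psiM_zero]; exact Submodule.zero_mem _
  · intro a b _ _ ha hb; rw [psiM_add]; exact Submodule.add_mem _ ha hb
  · intro c a _ ha; rw [psiM_smul]; exact Submodule.smul_mem _ _ ha

end Aux

/-- The map `θ : C → Cend₁ = k[D,v]`,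
`θ(∑ (v-D)^m a(f_m, g_m)) = ∑ f_m (v-D)^{m+2}`, is a well-defined `H`-linear homomorphism of
conformal algebras; its image is `Cend_{1,v²} = k[D,v]·(v-D)²` and its kernel is `R`
(hence `C/R ≅ Cend_{1,v²}`). -/
theorem stmt17 (k : Type) [Field k] [IsAlgClosed k] [CharZero k] :
    ∃ θ : Cend2 k → Polynomial (Polynomial k),
      (∀ (m : ℕ) (f g : Polynomial k),
        θ ((vD k) ^ m • aMat k f g) = Polynomial.C f * (vD k) ^ (m + 2)) ∧
      (∀ x ∈ Cset k, ∀ y ∈ Cset k, θ (x + y) = θ x + θ y) ∧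
      (∀ (r : k), ∀ x ∈ Cset k, θ (r • x) = r • θ x) ∧
      (∀ x ∈ Cset k,
        θ ((Polynomial.X : Polynomial (Polynomial k)) • x) = Polynomial.X * θ x) ∧
      (∀ x ∈ Cset k, ∀ y ∈ Cset k, ∀ n : ℕ, θ (omulM k n x y) = omulP k n (θ x) (θ y)) ∧
      θ '' (Cset k) = {q : Polynomial (Polynomial k) | ∃ p, q = p * (vD k) ^ 2} ∧
      (∀ x ∈ Cset k, (θ x = 0 ↔ x ∈ Rset k)) := by
  refine ⟨fun A => A 1 1, ?_, ?_, ?_, ?_, ?_, ?_, ?_⟩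
  · intro m f g
    simp only [Matrix.smul_apply, smul_eq_mul, aMat]
    simp
    ring
  · intro x _ y _; simp [Matrix.add_apply]
  · intro r x _; simp [Matrix.smul_apply]
  · intro x _; simp [Matrix.smul_apply, smul_eq_mul]
  · intro x hx y _ n
    have h10 : x 1 0 = 0 := Cset_entry10 k x hx
    simp only [omulM, Matrix.of_apply, Fin.sum_univ_two, h10, omulP_zero_left, zero_add]
  · ext q
    constructor
    · rintro ⟨x, hx, rfl⟩
      obtain ⟨p, r, hr, rfl⟩ := Cset_decomp k x hx
      exact ⟨p, by simp [Matrix.add_apply, psiM_apply11, Rset_entry11 k r hr]⟩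
    · rintro ⟨p, rfl⟩
      exact ⟨psiM k p, psiM_mem_Cset k p, psiM_apply11 k p⟩
  · intro x hx
    constructor
    · intro h0
      obtain ⟨p, r, hr, rfl⟩ := Cset_decomp k x hx
      have : p * (vD k) ^ 2 = 0 := by
        simpa [Matrix.add_apply, psiM_apply11, Rset_entry11 k r hr] using h0
      have hp : p = 0 := by
        rcases mul_eq_zero.mp this with h | h
        · exact h
        · exact absurd (pow_eq_zero_iff (by norm_num) |>.mp h) (vD_ne_zero k)
      rw [hp, psiM_zero, zero_add]
      exact hr
    · intro hR
      exact Rset_entry11 k x hR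
end

section
/- There is no k-linear map ψ: k[v] → k[D,v] satisfying, for all f₁, f₂ ∈ k[v] and all n ∈ ℕ, the identity ψ(f₁·∂ᵥⁿ(v²f₂)) = f₁·∂ᵥⁿf₂ + ψ(f₁)∘ₙ(v²f₂) + f₁∘ₙ(v²·ψ(f₂)), where ∘ₙ denotes the n-th product on k[D,v] and v²·ψ(f₂) is the product in the polynomial ring k[D,v]. -/
open Polynomial in
/-- The constant coefficient (at `D^0 v^0`) of `omulP k n a b` vanishes provided the
relevant derivative coefficients of `b` vanish. -/
lemma eps_omulP_eq_zero (k : Type) [Field k] (n : ℕ) (a b : Polynomial (Polynomial k))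
    (H : ∀ m j : ℕ, j + m ≤ n → (Polynomial.derivative^[m] (b.coeff j)).coeff 0 = 0) :
    ((omulP k n a b).coeff 0).coeff 0 = 0 := by
  unfold omulP
  rw [Polynomial.sum_def, Polynomial.finset_sum_coeff, Polynomial.finset_sum_coeff]
  refine Finset.sum_eq_zero (fun i _ => ?_)
  rw [Polynomial.sum_def, Polynomial.finset_sum_coeff, Polynomial.finset_sum_coeff]
  refine Finset.sum_eq_zero (fun j _ => ?_)
  rw [Polynomial.finset_sum_coeff, Polynomial.finset_sum_coeff]
  refine Finset.sum_eq_zero (fun s hs => ?_)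
  rw [Polynomial.coeff_smul, Polynomial.coeff_monomial]
  by_cases hjs : j - s = 0
  · rw [if_pos hjs]
    have hsj : s = j := by
      have := Finset.mem_range.mp hs; omega
    by_cases hd : (n - i).descFactorial s = 0
    · rw [hd]; simp
    · have hle : s ≤ n - i := by
        by_contra hlt
        exact hd (Nat.descFactorial_eq_zero_iff_lt.mpr (by omega))
      have h0 : (a.coeff i * Polynomial.derivative^[n - i - s] (b.coeff j)).coeff 0 = 0 := by
        rw [Polynomial.mul_coeff_zero, H (n - i - s) j (by omega), mul_zero]
      rw [Polynomial.coeff_smul, h0, smul_zero]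
  · rw [if_neg hjs]; simp

/-- There is no `k`-linear map `ψ : k[v] → k[D,v]` satisfying
`ψ(f₁ · ∂ᵥⁿ(v² f₂)) = f₁ · ∂ᵥⁿ f₂ + ψ(f₁) ∘ₙ (v² f₂) + f₁ ∘ₙ (v² · ψ(f₂))`
for all `f₁, f₂ ∈ k[v]` and all `n ∈ ℕ`. -/
theorem stmt18 (k : Type) [Field k] [IsAlgClosed k] [CharZero k] :
    ¬ ∃ ψ : Polynomial k →ₗ[k] Polynomial (Polynomial k),
      ∀ (f₁ f₂ : Polynomial k) (n : ℕ),
        ψ (f₁ * Polynomial.derivative^[n] (Polynomial.X ^ 2 * f₂))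
          = Polynomial.C (f₁ * Polynomial.derivative^[n] f₂)
            + omulP k n (ψ f₁) (Polynomial.C (Polynomial.X ^ 2 * f₂))
            + omulP k n (Polynomial.C f₁)
                (Polynomial.C (Polynomial.X ^ 2 : Polynomial k) * ψ f₂) := by
  rintro ⟨ψ, h⟩
  have hx0 : ∀ q : Polynomial k, (Polynomial.X * q).coeff 0 = 0 := fun q => by
    rw [Polynomial.mul_coeff_zero, Polynomial.coeff_X_zero, zero_mul]
  have hx20 : ∀ q : Polynomial k, (Polynomial.X ^ 2 * q).coeff 0 = 0 := fun q => by
    rw [Polynomial.mul_coeff_zero]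
    simp [Polynomial.coeff_X_pow]
  have hx21 : ∀ q : Polynomial k, (Polynomial.X ^ 2 * q).coeff 1 = 0 := fun q => by
    rw [pow_two, mul_assoc]
    have h1 : ((Polynomial.X : Polynomial k) * (Polynomial.X * q)).coeff (0 + 1)
        = (Polynomial.X * q).coeff 0 := Polynomial.coeff_X_mul _ 0
    simp only [zero_add] at h1
    rw [h1, hx0]
  have h1 := h 1 1 0
  have h2 := h 1 Polynomial.X 1
  simp only [Function.iterate_zero, id_eq, one_mul, mul_one, Function.iterate_one] at h1 h2
  -- extract the constant coefficient from h1
  have z1 : ((omulP k 0 (ψ 1) (Polynomial.C (Polynomial.X ^ 2))).coeff 0).coeff 0 = 0 := by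
    refine eps_omulP_eq_zero k 0 _ _ (fun m j hmj => ?_)
    have hj : j = 0 := by omega
    have hm : m = 0 := by omega
    subst hj hm
    simp only [Polynomial.coeff_C_zero, Function.iterate_zero, id_eq]
    simp [Polynomial.coeff_X_pow]
  have z2 : ((omulP k 0 (Polynomial.C 1)
      (Polynomial.C (Polynomial.X ^ 2 : Polynomial k) * ψ 1)).coeff 0).coeff 0 = 0 := by
    refine eps_omulP_eq_zero k 0 _ _ (fun m j hmj => ?_)
    have hj : j = 0 := by omega
    have hm : m = 0 := by omega
    subst hj hm
    simp only [Polynomial.coeff_C_mul, Function.iterate_zero, id_eq]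
    exact hx20 _
  have e1 := congrArg (fun p : Polynomial (Polynomial k) => (p.coeff 0).coeff 0) h1
  simp only [Polynomial.coeff_add] at e1
  rw [z1, z2] at e1
  simp only [Polynomial.coeff_C_zero, Polynomial.coeff_one, if_pos rfl, add_zero] at e1
  -- e1 : ((ψ (X^2)).coeff 0).coeff 0 = 1
  have hX3 : (Polynomial.X : Polynomial k) ^ 2 * Polynomial.X = Polynomial.X ^ 3 :=
    (pow_succ _ 2).symm
  rw [hX3, Polynomial.derivative_X_pow, Polynomial.derivative_X] at h2
  have z3 : ((omulP k 1 (ψ 1) (Polynomial.C (Polynomial.X ^ 3))).coeff 0).coeff 0 = 0 := by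
    refine eps_omulP_eq_zero k 1 _ _ (fun m j hmj => ?_)
    have hcase : (j = 0 ∧ m = 0) ∨ (j = 0 ∧ m = 1) ∨ (j = 1 ∧ m = 0) := by omega
    rcases hcase with ⟨rfl, rfl⟩ | ⟨rfl, rfl⟩ | ⟨rfl, rfl⟩
    · simp only [Polynomial.coeff_C_zero, Function.iterate_zero, id_eq]
      simp [Polynomial.coeff_X_pow]
    · simp only [Polynomial.coeff_C_zero, Function.iterate_one, Polynomial.derivative_X_pow]
      simp [Polynomial.coeff_X_pow]
    · simp only [Function.iterate_zero, id_eq]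
      rw [Polynomial.coeff_C]
      simp
  have z4 : ((omulP k 1 (Polynomial.C 1)
      (Polynomial.C (Polynomial.X ^ 2 : Polynomial k) * ψ Polynomial.X)).coeff 0).coeff 0
      = 0 := by
    refine eps_omulP_eq_zero k 1 _ _ (fun m j hmj => ?_)
    have hcase : (j = 0 ∧ m = 0) ∨ (j = 0 ∧ m = 1) ∨ (j = 1 ∧ m = 0) := by omega
    rcases hcase with ⟨rfl, rfl⟩ | ⟨rfl, rfl⟩ | ⟨rfl, rfl⟩
    · simp only [Polynomial.coeff_C_mul, Function.iterate_zero, id_eq]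
      exact hx20 _
    · simp only [Polynomial.coeff_C_mul, Function.iterate_one]
      rw [Polynomial.coeff_derivative, hx21, zero_mul]
    · simp only [Polynomial.coeff_C_mul, Function.iterate_zero, id_eq]
      exact hx20 _
  have e2 := congrArg (fun p : Polynomial (Polynomial k) => (p.coeff 0).coeff 0) h2
  simp only [Polynomial.coeff_add] at e2
  rw [z3, z4] at e2
  have h31 : (3 : ℕ) - 1 = 2 := rfl
  rw [h31] at e2
  have hsm : ψ (Polynomial.C ((3 : ℕ) : k) * Polynomial.X ^ 2)
      = ((3 : ℕ) : k) • ψ (Polynomial.X ^ 2) := by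
    rw [← Polynomial.smul_eq_C_mul, map_smul]
  rw [hsm] at e2
  simp only [Polynomial.coeff_smul, Polynomial.coeff_C_zero, Polynomial.coeff_one,
    if_pos rfl, add_zero, smul_eq_mul] at e2
  rw [e1] at e2
  -- e2 : (3 : k) * 1 = 1
  norm_num at e2
end
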